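/- For every α ∈ ℂ, the irreducible subquotients V'_{α,0} and V'_{α,1} of the Virasoro modules V_{α,0} and V_{α,1} are isomorphic as Virasoro modules. (For α ∉ ℤ this says V_{α,0} ≅ V_{α,1}; for α ∈ ℤ it says V_{0,0}/ℂv_0 ≅ ⊕_{i≠0} ℂ v_i ⊆ V_{0,1}.) -/

import Mathlib

open Finsupp TensorProduct

noncomputable section

/-- The underlying space of the Virasoro algebra: coordinates on the basis
`{d_n : n ∈ ℤ}` together with the coefficient of the central element `C`. -/
abbrev VirCarrier : Type := (ℤ →₀ ℂ) × ℂ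

/-- The basis element `d_n`. -/
def dGen (n : ℤ) : VirCarrier := (Finsupp.single n 1, 0)

/-- The central element `C`. -/
def cGen : VirCarrier := (0, 1)

/-- `[d_m, d_n] = (n-m) d_{m+n} + δ_{m,-n} ((m³-m)/12) C`. -/
def dBracket (m n : ℤ) : VirCarrier :=
  (Finsupp.single (m + n) ((n : ℂ) - (m : ℂ)), if m = -n then ((m : ℂ) ^ 3 - (m : ℂ)) / 12 else 0)

/-- The bilinear extension of the bracket on basis elements; the central element `C`
brackets to zero with everything (`[d_n, C] = 0`). -/
def virBracket (x y : VirCarrier) : VirCarrier :=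
  x.1.sum fun m a => y.1.sum fun n b => (a * b) • dBracket m n

/-- Action of `d_n` on `V_{α,β}`: `d_n · v_k = (α + k + nβ) v_{k+n}`, where `v_k` is the
basis element `Finsupp.single k 1`. -/
def dAct (α β : ℂ) (n : ℤ) : Module.End ℂ (ℤ →₀ ℂ) :=
  Finsupp.lsum ℂ fun k => (α + (k : ℂ) + (n : ℂ) * β) • Finsupp.lsingle (k + n)

/-- The action of the Virasoro algebra on the intermediate series module `V_{α,β}`;
`C` acts by zero. -/
def vabAction (α β : ℂ) : VirCarrier →ₗ[ℂ] Module.End ℂ (ℤ →₀ ℂ) :=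
  (Finsupp.lsum ℂ fun n =>
    LinearMap.toSpanSingleton ℂ (Module.End ℂ (ℤ →₀ ℂ)) (dAct α β n)).comp
    (LinearMap.fst ℂ (ℤ →₀ ℂ) ℂ)

/-- A subspace invariant under an action. -/
def ActInvariant {L V : Type*} [AddCommGroup V] [Module ℂ V]
    (act : L → Module.End ℂ V) (U : Submodule ℂ V) : Prop :=
  ∀ x : L, ∀ v ∈ U, act x v ∈ U

/-- Irreducibility: the only invariant subspaces are `⊥` and `⊤`. -/
def ActIrreducible {L V : Type*} [AddCommGroup V] [Module ℂ V]
    (act : L → Module.End ℂ V) : Prop :=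
  ∀ U : Submodule ℂ V, ActInvariant act U → U = ⊥ ∨ U = ⊤

/-- The set `S` generates the module: any invariant subspace containing `S` is everything. -/
def ActGenerates {L V : Type*} [AddCommGroup V] [Module ℂ V]
    (act : L → Module.End ℂ V) (S : Set V) : Prop :=
  ∀ U : Submodule ℂ V, ActInvariant act U → S ⊆ U → U = ⊤

/-! The map `v_k ↦ (α + k) v_k` intertwines `V_{α,0}` and `V_{α,1}`: both sides send `v_k` under
`d_n` to `(α + k)(α + k + n) v_{k+n}`. For `α ∉ ℤ` no scalar `α + k` vanishes, so the map is
invertible; for `α = 0` it is `v_k ↦ k v_k`, which kills exactly `ℂ v_0` and has image spanned by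
the `v_i` with `i ≠ 0`. -/

section DiagScale

variable {ι K : Type*} [Field K]

def diagScale (c : ι → K) : (ι →₀ K) →ₗ[K] (ι →₀ K) :=
  Finsupp.lsum K fun k => c k • Finsupp.lsingle k

theorem diagScale_single (c : ι → K) (k : ι) (b : K) :
    diagScale c (single k b) = single k (c k * b) := by
  rw [diagScale, lsum_single, LinearMap.smul_apply, lsingle_apply, smul_single, smul_eq_mul]

theorem diagScale_apply (c : ι → K) (v : ι →₀ K) (j : ι) : diagScale c v j = c j * v j := by
  classical
  induction v using Finsupp.induction_linear with
  | zero => simp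
  | add v w hv hw => rw [map_add, Finsupp.add_apply, Finsupp.add_apply, hv, hw, mul_add]
  | single k b =>
    rw [diagScale_single, single_apply, single_apply]
    split_ifs with h
    · rw [h]
    · rw [mul_zero]

theorem diagScale_comp_diagScale (c c' : ι → K) :
    (diagScale c).comp (diagScale c') = diagScale (c * c') :=
  lhom_ext fun k b => by
    simp only [LinearMap.comp_apply, diagScale_single, Pi.mul_apply, mul_assoc]

theorem diagScale_one : diagScale (1 : ι → K) = LinearMap.id :=
  lhom_ext fun k b => by rw [diagScale_single, Pi.one_apply, one_mul, LinearMap.id_apply]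

def diagScaleEquiv (c : ι → K) (hc : ∀ k, c k ≠ 0) : (ι →₀ K) ≃ₗ[K] (ι →₀ K) :=
  LinearEquiv.ofLinearMap (diagScale c) (diagScale c⁻¹)
    (by rw [diagScale_comp_diagScale, show c * c⁻¹ = 1 from funext fun k => mul_inv_cancel₀ (hc k),
      diagScale_one])
    (by rw [diagScale_comp_diagScale, show c⁻¹ * c = 1 from funext fun k => inv_mul_cancel₀ (hc k),
      diagScale_one])

theorem ker_diagScale (c : ι → K) :
    LinearMap.ker (diagScale c) = supported K K {k | c k = 0} := by
  ext v
  simp only [LinearMap.mem_ker, mem_supported', Set.mem_ofPred_eq, Finsupp.ext_iff,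
    diagScale_apply, Finsupp.coe_zero, Pi.zero_apply, mul_eq_zero]
  exact forall_congr' fun j => by tauto

theorem range_diagScale (c : ι → K) :
    LinearMap.range (diagScale c) = supported K K {k | c k ≠ 0} := by
  apply le_antisymm
  · rintro _ ⟨v, rfl⟩
    rw [mem_supported']
    intro j hj
    rw [diagScale_apply, not_not.mp hj, zero_mul]
  · rw [supported_eq_span_single, Submodule.span_le]
    rintro _ ⟨k, hk, rfl⟩
    exact ⟨single k (c k)⁻¹, by rw [diagScale_single, mul_inv_cancel₀ hk]⟩

end DiagScale

theorem dAct_single (α β : ℂ) (n k : ℤ) (b : ℂ) :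
    dAct α β n (single k b) = single (k + n) ((α + k + n * β) * b) := by
  rw [dAct, lsum_single, LinearMap.smul_apply, lsingle_apply, smul_single, smul_eq_mul]

theorem vabAction_apply (α β : ℂ) (x : VirCarrier) (v : ℤ →₀ ℂ) :
    vabAction α β x v = x.1.sum fun n a => a • dAct α β n v := by
  simp [vabAction, LinearMap.toSpanSingleton_apply]

theorem map_vabAction_of_comp_dAct {α β α' β' : ℂ} {g : (ℤ →₀ ℂ) →ₗ[ℂ] (ℤ →₀ ℂ)}
    (h : ∀ n : ℤ, g.comp (dAct α β n) = (dAct α' β' n).comp g)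
    (x : VirCarrier) (v : ℤ →₀ ℂ) :
    g (vabAction α β x v) = vabAction α' β' x (g v) := by
  rw [vabAction_apply, vabAction_apply, map_finsuppSum]
  refine sum_congr fun n _ => ?_
  rw [map_smul, ← LinearMap.comp_apply, h n, LinearMap.comp_apply]

theorem diagScale_comp_dAct (α : ℂ) (n : ℤ) :
    (diagScale fun k : ℤ => α + k).comp (dAct α 0 n)
      = (dAct α 1 n).comp (diagScale fun k : ℤ => α + k) :=
  lhom_ext fun k b => by
    simp only [LinearMap.comp_apply, dAct_single, diagScale_single]
    congr 1
    push_cast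
    ring

theorem map_vabAction_diagScale (α : ℂ) (x : VirCarrier) (v : ℤ →₀ ℂ) :
    diagScale (fun k : ℤ => α + k) (vabAction α 0 x v)
      = vabAction α 1 x (diagScale (fun k : ℤ => α + k) v) :=
  map_vabAction_of_comp_dAct (diagScale_comp_dAct α) x v

/-- For every `α ∈ ℂ`, the irreducible subquotients `V'_{α,0}` and `V'_{α,1}` are isomorphic
Virasoro modules.  For `α ∉ ℤ` this is an isomorphism `V_{α,0} ≅ V_{α,1}`; for `α ∈ ℤ` it is
an isomorphism `V_{0,0}/ℂv_0 ≅ ⊕_{i≠0} ℂ v_i ⊆ V_{0,1}`, expressed by an intertwining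
linear map `V_{0,0} → V_{0,1}` with kernel `ℂ v_0` and range `⊕_{i≠0} ℂ v_i`. -/
theorem vab_prime_iso :
    (∀ α : ℂ, (∀ z : ℤ, α ≠ (z : ℂ)) →
      ∃ e : (ℤ →₀ ℂ) ≃ₗ[ℂ] (ℤ →₀ ℂ),
        ∀ (x : VirCarrier) (v : ℤ →₀ ℂ),
          e (vabAction α 0 x v) = vabAction α 1 x (e v)) ∧
    (∃ f : (ℤ →₀ ℂ) →ₗ[ℂ] (ℤ →₀ ℂ),
      (∀ (x : VirCarrier) (v : ℤ →₀ ℂ), f (vabAction 0 0 x v) = vabAction 0 1 x (f v)) ∧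
      LinearMap.ker f = Submodule.span ℂ {Finsupp.single (0 : ℤ) (1 : ℂ)} ∧
      LinearMap.range f
        = Submodule.span ℂ {g : ℤ →₀ ℂ | ∃ i : ℤ, i ≠ 0 ∧ g = Finsupp.single i 1}) := by
  refine ⟨fun α hα => ?_, ⟨diagScale fun k : ℤ => 0 + k, map_vabAction_diagScale 0, ?_, ?_⟩⟩
  · have hne : ∀ k : ℤ, α + k ≠ 0 := fun k hk =>
      hα (-k) (by push_cast; linear_combination hk)
    exact ⟨diagScaleEquiv _ hne, map_vabAction_diagScale α⟩
  · rw [ker_diagScale, supported_eq_span_single]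
    congr
    ext g
    simp
  · rw [range_diagScale, supported_eq_span_single]
    congr
    ext g
    simp [eq_comm]
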